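/- arXiv:math/0304177 — 6 statements merged into one kernel-verified Lean document; each statement's English description precedes it below -/
import Mathlib

section
/- Let G be a group, let (g_n) be a sequence of pairwise distinct elements of G, and let x ∈ ℓ²(G;ℝ). If the sequence (g_n•x) converges in ℓ²(G;ℝ) to some y, then y = 0. In particular, if x lies on the unit sphere of ℓ²(G;ℝ), then (g_n•x) cannot converge to a point of the unit sphere. -/
/-! Coordinates of an `ℓᵖ` vector with `p < ∞` tend to `0` at infinity, and `h * g n` leaves
every finite set because the `g n` are distinct. So every coordinate of `g n • x` tends to `0`,
while coordinate evaluation is continuous on `ℓ²`, so every coordinate of the limit `y` vanishes. -/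

open Filter Topology

theorem Memℓp.tendsto_norm_cofinite_zero {α : Type*} {E : α → Type*}
    [∀ i, NormedAddCommGroup (E i)] {p : ENNReal} {f : ∀ i, E i} (hf : Memℓp f p)
    (hp : p ≠ ⊤) : Tendsto (fun i => ‖f i‖) cofinite (𝓝 0) := by
  rcases eq_or_ne p 0 with rfl | hp0
  · refine tendsto_const_nhds.congr' ?_
    filter_upwards [(memℓp_zero_iff.1 hf).compl_mem_cofinite] with i hi
    simp_all
  · have hpos : 0 < p.toReal := ENNReal.toReal_pos hp0 hp
    have hrpow := (hf.summable hpos).tendsto_cofinite_zero.rpow_const (p := p.toReal⁻¹)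
      (Or.inr (inv_nonneg.2 hpos.le))
    refine (hrpow.congr fun i => ?_).trans (by rw [Real.zero_rpow (inv_ne_zero hpos.ne')])
    exact Real.rpow_rpow_inv (norm_nonneg _) hpos.ne'

/-- If `(g_n)` is a sequence of pairwise distinct elements of a group `G`,
`x ∈ ℓ²(G; ℝ)`, and the sequence `g_n • x` (where `(g • x) h = x (h * g)`) converges to
some `y`, then `y = 0`; in particular if `x` lies on the unit sphere, the limit `y`
cannot lie on the unit sphere. -/
theorem statement2 (G : Type*) [Group G] (g : ℕ → G) (hg : Function.Injective g)
    (x y : lp (fun _ : G => ℝ) 2) (z : ℕ → lp (fun _ : G => ℝ) 2)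
    (hz : ∀ (n : ℕ) (h : G), z n h = x (h * g n))
    (hconv : Filter.Tendsto z Filter.atTop (nhds y)) :
    y = 0 ∧ (‖x‖ = 1 → ‖y‖ ≠ 1) := by
  have hy : y = 0 := by
    ext h
    have hlim : Tendsto (fun n => z n h) atTop (𝓝 (y h)) :=
      ((lp.lipschitzWith_one_eval 2 h).continuous.tendsto y).comp hconv
    have htranslate : Tendsto (fun n => h * g n) atTop cofinite :=
      Nat.cofinite_eq_atTop ▸ ((mul_right_injective h).comp hg).tendsto_cofinite
    have hzero : Tendsto (fun n => z n h) atTop (𝓝 0) := by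
      simp only [hz]
      exact tendsto_zero_iff_norm_tendsto_zero.2 <|
        ((lp.memℓp x).tendsto_norm_cofinite_zero ENNReal.ofNat_ne_top).comp htranslate
    exact tendsto_nhds_unique hlim hzero
  exact ⟨hy, fun _ => by simp [hy]⟩
end

section
/- Let G be a group with no nonidentity element of finite order (torsion-free). Then the right-translation action of G on the unit sphere S of ℓ²(G;ℝ) is free and properly discontinuous. -/
/-!
Right translation is an isometric representation of `G` on `ℓ²(G)` whose matrix coefficients
`⟪g • x, y⟫ = ⟪x, g⁻¹ • y⟫` vanish at infinity: the translates `g⁻¹ • y` are bounded and tend to `0`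
coordinatewise, hence weakly. So for unit vectors `‖g • x - y‖² = 2 - 2 ⟪g • x, y⟫ > 1` for all but
finitely many `g`, and an isometric action with this property is properly discontinuous. If `g` has
infinite order, a vector fixed by `g` is constant along the infinite orbits `h * g ^ ℤ`; being
square-summable it vanishes, so for torsion-free `G` no point of the sphere has a nontrivial
stabilizer.
-/

/-- An action (given as a family of maps `a g : X → X`) of a group `G` on a topological
space `X` is properly discontinuous if:
(1) points in different orbits can be separated by open sets `U`, `V` with
    `a g '' U ∩ V = ∅` for all `g`;
(2) every stabilizer is finite;
(3) every point has an open neighborhood `U`, stable under its stabilizer, with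
    `a g '' U ∩ U = ∅` for every `g` outside the stabilizer. -/
def IsProperlyDiscontinuousAction {G X : Type*} [TopologicalSpace X]
    (a : G → X → X) : Prop :=
  (∀ x y : X, (∀ g : G, a g x ≠ y) →
    ∃ U V : Set X, IsOpen U ∧ IsOpen V ∧ x ∈ U ∧ y ∈ V ∧
      ∀ g : G, (a g '' U) ∩ V = ∅) ∧
  (∀ x : X, {g : G | a g x = x}.Finite) ∧
  (∀ x : X, ∃ U : Set X, IsOpen U ∧ x ∈ U ∧
    (∀ g : G, a g x = x → a g '' U ⊆ U) ∧
    ∀ g : G, a g x ≠ x → (a g '' U) ∩ U = ∅)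

open Filter Topology Metric
open scoped lp ENNReal InnerProductSpace

section ProperlyDiscontinuous

variable {ι X : Type*} [MetricSpace X]

theorem exists_pos_forall_le_dist_of_eventually_le {f : ι → X} {y : X} {c : ℝ} (hc : 0 < c)
    (h : ∀ᶠ i in cofinite, c ≤ dist (f i) y) :
    ∃ r > 0, ∀ i, f i ≠ y → r ≤ dist (f i) y := by
  set S := {i | ¬c ≤ dist (f i) y ∧ f i ≠ y}
  have hS : S.Finite := (eventually_cofinite.1 h).subset fun _ hi => hi.1
  have hsmall : ∀ᶠ r in 𝓝[>] (0 : ℝ), r ≤ c ∧ ∀ i ∈ S, r ≤ dist (f i) y :=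
    nhdsWithin_le_nhds <| (eventually_le_nhds hc).and <|
      (eventually_all_finite hS).2 fun i hi => eventually_le_nhds (dist_pos.2 hi.2)
  obtain ⟨r, ⟨hrc, hrS⟩, hr⟩ := (hsmall.and self_mem_nhdsWithin).exists
  refine ⟨r, hr, fun i hi => ?_⟩
  by_cases hic : c ≤ dist (f i) y
  · exact hrc.trans hic
  · exact hrS i ⟨hic, hi⟩

theorem Isometry.image_ball_inter_ball_eq_empty {Y : Type*} [PseudoMetricSpace Y] {f : X → Y}
    (hf : Isometry f) {x : X} {y : Y} {r : ℝ}
    (hr : r ≤ dist (f x) y) : f '' ball x (r / 2) ∩ ball y (r / 2) = ∅ := by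
  refine Set.eq_empty_of_forall_notMem ?_
  rintro _ ⟨⟨w, hw, rfl⟩, hwy⟩
  rw [mem_ball] at hw hwy
  have := dist_triangle (f x) (f w) y
  rw [hf.dist_eq] at this
  linarith [dist_comm x w]

theorem isProperlyDiscontinuousAction_of_isometry {G : Type*} {a : G → X → X}
    (ha : ∀ g, Isometry (a g)) (hfar : ∀ x y, ∃ c > 0, ∀ᶠ g in cofinite, c ≤ dist (a g x) y) :
    IsProperlyDiscontinuousAction a := by
  refine ⟨fun x y hxy => ?_, fun x => ?_, fun x => ?_⟩
  · obtain ⟨c, hc, hcg⟩ := hfar x y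
    obtain ⟨r, hr, hrg⟩ := exists_pos_forall_le_dist_of_eventually_le hc hcg
    exact ⟨ball x (r / 2), ball y (r / 2), isOpen_ball, isOpen_ball, mem_ball_self (by linarith),
      mem_ball_self (by linarith), fun g => (ha g).image_ball_inter_ball_eq_empty (hrg g (hxy g))⟩
  · obtain ⟨c, hc, hcg⟩ := hfar x x
    exact (eventually_cofinite.1 hcg).subset fun g (hg : a g x = x) => by simpa [hg] using hc
  · obtain ⟨c, hc, hcg⟩ := hfar x x
    obtain ⟨r, hr, hrg⟩ := exists_pos_forall_le_dist_of_eventually_le hc hcg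
    refine ⟨ball x (r / 2), isOpen_ball, mem_ball_self (by linarith), fun g hg => ?_,
      fun g hg => (ha g).image_ball_inter_ball_eq_empty (hrg g hg)⟩
    rintro _ ⟨w, hw, rfl⟩
    rwa [mem_ball, ← hg, (ha g).dist_eq]

end ProperlyDiscontinuous

theorem lp.tendsto_cofinite_zero {α E : Type*} [NormedAddCommGroup E] {p : ℝ≥0∞}
    (hp : 0 < p.toReal) (x : lp (fun _ : α => E) p) : Tendsto x cofinite (𝓝 0) := by
  have h := ((lp.memℓp x).summable hp).tendsto_cofinite_zero.rpow_const
    (Or.inr (inv_nonneg.2 hp.le))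
  rw [Real.zero_rpow (inv_ne_zero hp.ne')] at h
  exact tendsto_zero_iff_norm_tendsto_zero.2 <|
    h.congr fun i => Real.rpow_rpow_inv (norm_nonneg _) hp.ne'

theorem lp.tendsto_inner_of_norm_le_of_tendsto_apply {α ι : Type*} {l : Filter ι}
    {z : ι → ℓ²(α, ℝ)} {C : ℝ} (hC : ∀ i, ‖z i‖ ≤ C)
    (hz : ∀ a, Tendsto (fun i => z i a) l (𝓝 0)) (x : ℓ²(α, ℝ)) :
    Tendsto (fun i => ⟪x, z i⟫_ℝ) l (𝓝 0) := by
  classical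
  set φ : Finset α → ℓ²(α, ℝ) := fun s => ∑ a ∈ s, lp.single 2 a (x a)
  have hφ : Tendsto φ atTop (𝓝 x) := lp.hasSum_single ENNReal.ofNat_ne_top x
  have h_unif : TendstoUniformly (fun s i => ⟪φ s, z i⟫_ℝ) (fun i => ⟪x, z i⟫_ℝ) atTop := by
    rw [Metric.tendstoUniformly_iff]
    intro ε hε
    have hnorm := (tendsto_iff_norm_sub_tendsto_zero.1 hφ).mul_const C
    rw [zero_mul] at hnorm
    filter_upwards [hnorm.eventually (gt_mem_nhds hε)] with s hs i
    rw [dist_eq_norm, ← inner_sub_left]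
    calc ‖⟪x - φ s, z i⟫_ℝ‖ ≤ ‖x - φ s‖ * ‖z i‖ := norm_inner_le_norm _ _
      _ ≤ ‖φ s - x‖ * C := by rw [norm_sub_rev]; gcongr; exact hC i
      _ < ε := hs
  have h_fin : ∀ s, Tendsto (fun i => ⟪φ s, z i⟫_ℝ) l (𝓝 0) := fun s => by
    simpa [φ, sum_inner, lp.inner_single_left] using
      tendsto_finsetSum s fun a _ => (hz a).mul_const (x a)
  exact h_unif.tendsto_of_eventually_tendsto (Eventually.of_forall h_fin) tendsto_const_nhds

namespace RightRegular

variable {G : Type*} [Group G]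

instance : SMul G ℓ²(G, ℝ) where
  smul g x := ⟨fun h => x (h * g), memℓp_gen <|
    (Equiv.mulRight g).summable_iff.2 ((lp.memℓp x).summable (by norm_num))⟩

theorem smul_apply (g : G) (x : ℓ²(G, ℝ)) (h : G) : (g • x) h = x (h * g) := rfl

instance : DistribMulAction G ℓ²(G, ℝ) where
  one_smul x := lp.ext <| funext fun h => congrArg x (mul_one h)
  mul_smul g₁ g₂ x := lp.ext <| funext fun h => congrArg x (mul_assoc h g₁ g₂).symm
  smul_zero _ := rfl
  smul_add _ _ _ := rfl

theorem inner_smul_eq_inner_inv_smul (g : G) (x y : ℓ²(G, ℝ)) :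
    ⟪g • x, y⟫_ℝ = ⟪x, g⁻¹ • y⟫_ℝ := by
  simp only [lp.inner_eq_tsum]
  rw [← (Equiv.mulRight g⁻¹).tsum_eq]
  simp [smul_apply]

theorem norm_smul (g : G) (x : ℓ²(G, ℝ)) : ‖g • x‖ = ‖x‖ := by
  rw [← sq_eq_sq₀ (norm_nonneg _) (norm_nonneg _), ← real_inner_self_eq_norm_sq,
    ← real_inner_self_eq_norm_sq, inner_smul_eq_inner_inv_smul, inv_smul_smul]

instance : IsIsometricSMul G ℓ²(G, ℝ) :=
  ⟨fun g => Isometry.of_dist_eq fun x y => by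
    rw [dist_eq_norm, dist_eq_norm, ← smul_sub, norm_smul]⟩

theorem tendsto_inner_smul_cofinite (x y : ℓ²(G, ℝ)) :
    Tendsto (fun g : G => ⟪g • x, y⟫_ℝ) cofinite (𝓝 0) := by
  simp_rw [inner_smul_eq_inner_inv_smul]
  refine lp.tendsto_inner_of_norm_le_of_tendsto_apply (fun g => (norm_smul g⁻¹ y).le)
    (fun h => ?_) x
  have hinj : Function.Injective fun g : G => h * g⁻¹ := fun g₁ g₂ hg => by simpa using hg
  exact (lp.tendsto_cofinite_zero (by norm_num) y).comp hinj.tendsto_cofinite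

theorem tendsto_norm_smul_sub_sq_cofinite (x y : ℓ²(G, ℝ)) :
    Tendsto (fun g : G => ‖g • x - y‖ ^ 2) cofinite (𝓝 (‖x‖ ^ 2 + ‖y‖ ^ 2)) := by
  have h := (((tendsto_inner_smul_cofinite x y).const_mul 2).const_sub (‖x‖ ^ 2)).add_const
    (‖y‖ ^ 2)
  simpa [norm_sub_sq_real, norm_smul] using h

theorem isOfFinOrder_of_smul_eq_self {g : G} {x : ℓ²(G, ℝ)} (hx : x ≠ 0) (hgx : g • x = x) :
    IsOfFinOrder g := by
  by_contra hg
  refine hx (lp.ext <| funext fun h => ?_)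
  have hconst : ∀ n : ℤ, x (h * g ^ n) = x h := fun n => by
    rw [← smul_apply, MulAction.mem_stabilizer_iff.1 ((MulAction.stabilizer G x).zpow_mem hgx n)]
  have hinj : Function.Injective fun n : ℤ => h * g ^ n :=
    fun m n hmn => injective_zpow_iff_not_isOfFinOrder.2 hg (mul_left_cancel hmn)
  have hlim := (lp.tendsto_cofinite_zero (by norm_num) x).comp hinj.tendsto_cofinite
  simp only [Function.comp_def, hconst] at hlim
  exact tendsto_nhds_unique tendsto_const_nhds hlim

instance {r : ℝ} : MulAction G (sphere (0 : ℓ²(G, ℝ)) r) where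
  smul g p := ⟨g • (p : ℓ²(G, ℝ)),
    mem_sphere_zero_iff_norm.2 ((norm_smul g _).trans (norm_eq_of_mem_sphere p))⟩
  one_smul p := Subtype.ext (one_smul G (p : ℓ²(G, ℝ)))
  mul_smul g₁ g₂ p := Subtype.ext (mul_smul g₁ g₂ (p : ℓ²(G, ℝ)))

instance {r : ℝ} : IsIsometricSMul G (sphere (0 : ℓ²(G, ℝ)) r) :=
  ⟨fun g => Isometry.of_dist_eq fun p q => dist_smul g (p : ℓ²(G, ℝ)) q⟩

theorem eventually_one_lt_dist_smul (p q : sphere (0 : ℓ²(G, ℝ)) 1) :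
    ∀ᶠ g : G in cofinite, 1 < dist (g • p) q := by
  have h := tendsto_norm_smul_sub_sq_cofinite (p : ℓ²(G, ℝ)) q
  rw [norm_eq_of_mem_sphere p, norm_eq_of_mem_sphere q] at h
  filter_upwards [h.eventually (lt_mem_nhds (by norm_num : (1 : ℝ) < 1 ^ 2 + 1 ^ 2))] with g hg
  rw [Subtype.dist_eq, dist_eq_norm]
  exact (one_lt_sq_iff₀ (norm_nonneg _)).1 hg

end RightRegular

/-- If `G` is torsion-free, the right-translation action
`(g • x) h = x (h * g)` of `G` on the unit sphere of `ℓ²(G; ℝ)` is free and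
properly discontinuous. -/
theorem statement3 (G : Type*) [Group G] (hG : ∀ g : G, g ≠ 1 → ¬ IsOfFinOrder g) :
    ∃ a : G → Metric.sphere (0 : lp (fun _ : G => ℝ) 2) 1 →
          Metric.sphere (0 : lp (fun _ : G => ℝ) 2) 1,
      (∀ (g : G) (p : Metric.sphere (0 : lp (fun _ : G => ℝ) 2) 1) (h : G),
          (a g p : lp (fun _ : G => ℝ) 2) h = (p : lp (fun _ : G => ℝ) 2) (h * g)) ∧
      (∀ p, a 1 p = p) ∧
      (∀ (g₁ g₂ : G) (p), a (g₁ * g₂) p = a g₁ (a g₂ p)) ∧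
      (∀ (g : G) (p), a g p = p → g = 1) ∧
      IsProperlyDiscontinuousAction a := by
  refine ⟨(· • ·), fun _ _ _ => rfl, one_smul G, mul_smul, fun g p hgp => ?_,
    isProperlyDiscontinuousAction_of_isometry (isometry_smul _) fun p q =>
      ⟨1, one_pos, (RightRegular.eventually_one_lt_dist_smul p q).mono fun _ => le_of_lt⟩⟩
  by_contra hg
  have hp : (p : ℓ²(G, ℝ)) ≠ 0 := ne_zero_of_mem_unit_sphere p
  exact hG g hg (RightRegular.isOfFinOrder_of_smul_eq_self hp (congrArg Subtype.val hgp))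
end

section
/- Let V be a real vector space, H a group, and ρ : H → GL(V) an injective group homomorphism such that for every h ≠ e the linear map ρ(h) has no fixed vector other than 0. Then H contains at most one element of order two, and any element of order two in H belongs to the center of H. -/
/-!
If `ρ a` is an involution without nonzero fixed vectors, then `v + ρ a v` is fixed by `ρ a`,
hence zero, so `ρ a = -1`. Faithfulness then forces all elements of order two to coincide, and
`-1` commutes with every operator, so such an element is central.
-/

theorem eq_neg_of_involutive_of_fixed_eq_zero {V F : Type*} [AddCommGroup V] [FunLike F V V]
    [AddMonoidHomClass F V V] (f : F) (hf : Function.Involutive f)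
    (hfix : ∀ v, f v = v → v = 0) (v : V) : f v = -v :=
  eq_neg_of_add_eq_zero_right (hfix _ (by rw [map_add, hf, add_comm]))

theorem MonoidHom.apply_eq_neg_of_orderOf_eq_two {R V H : Type*} [Semiring R] [AddCommGroup V]
    [Module R V] [Monoid H] (ρ : H →* (V ≃ₗ[R] V))
    (hfix : ∀ h : H, h ≠ 1 → ∀ v : V, ρ h v = v → v = 0) {a : H} (ha : orderOf a = 2)
    (v : V) : ρ a v = -v := by
  have ha_ne_one : a ≠ 1 := by
    rintro rfl
    simp at ha
  have ha_sq : a * a = 1 := by rw [← sq, ← ha, pow_orderOf_eq_one]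
  refine eq_neg_of_involutive_of_fixed_eq_zero (ρ a) (fun w => ?_) (hfix a ha_ne_one) v
  rw [← LinearEquiv.mul_apply, ← map_mul, ha_sq, map_one, LinearEquiv.coe_one, id_eq]

/-- If a group `H` admits a faithful linear representation on a real vector
space in which every nonidentity element acts without nonzero fixed vectors, then `H`
contains at most one element of order two, and any such element is central. -/
theorem statement9 (V H : Type*) [AddCommGroup V] [Module ℝ V] [Group H]
    (ρ : H →* (V ≃ₗ[ℝ] V)) (hinj : Function.Injective ρ)
    (hfix : ∀ h : H, h ≠ 1 → ∀ v : V, ρ h v = v → v = 0) :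
    (∀ a b : H, orderOf a = 2 → orderOf b = 2 → a = b) ∧
    (∀ a : H, orderOf a = 2 → ∀ b : H, a * b = b * a) := by
  have hneg := fun (a : H) (ha : orderOf a = 2) => ρ.apply_eq_neg_of_orderOf_eq_two hfix ha
  refine ⟨fun a b ha hb => hinj (LinearEquiv.ext fun v => ?_),
    fun a ha b => hinj (LinearEquiv.ext fun v => ?_)⟩
  · rw [hneg a ha, hneg b hb]
  · simp only [map_mul, LinearEquiv.mul_apply, hneg a ha, map_neg]
end

section
/- Let H be a complex Hilbert space and T : H → H a continuous linear map of finite order m, i.e. T^m = id and T^k ≠ id for 1 ≤ k < m. Then the maps T, T², …, T^{m−1} all have no fixed point other than 0 if and only if Φ_m(T) = 0, where Φ_m is the m-th cyclotomic polynomial. -/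
/-!
Write `Φ_d` for `cyclotomic d`. Since `X ^ m - 1 = Φ_m * ∏_{d ∣ m, d < m} Φ_d` and
`Φ_d ∣ X ^ d - 1`, if no `T ^ d` with `d < m` has a nonzero fixed point then every `Φ_d(T)` with `d` a proper divisor
of `m` is injective, and `T ^ m = 1` forces `Φ_m(T) = 0`. Conversely, in characteristic zero `Φ_m`
is coprime to `X ^ k - 1 = ∏_{d ∣ k} Φ_d` for `0 < k < m`, so the kernels of `Φ_m(T)` and of
`T ^ k - 1` meet only in `0`.
-/

open Polynomial

theorem Polynomial.isCoprime_cyclotomic_X_pow_sub_one (K : Type*) [Field K] [CharZero K]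
    {m k : ℕ} (hk : 0 < k) (hkm : k < m) : IsCoprime (cyclotomic m K) (X ^ k - 1) := by
  have hℚ : IsCoprime (cyclotomic m ℚ) (X ^ k - 1) := by
    rw [← prod_cyclotomic_eq_X_pow_sub_one hk]
    exact IsCoprime.prod_right fun d hd =>
      cyclotomic.isCoprime_rat ((Nat.divisor_le hd).trans_lt hkm).ne'
  simpa [map_cyclotomic] using hℚ.map (mapRingHom (algebraMap ℚ K))

namespace Module.End

section CommRing

variable {R V : Type*} [CommRing R] [AddCommGroup V] [Module R V] (T : Module.End R V)

theorem injective_aeval_X_pow_sub_one_iff (k : ℕ) :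
    Function.Injective ⇑(aeval T (X ^ k - 1 : R[X])) ↔ ∀ x, (T ^ k) x = x → x = 0 := by
  simp [injective_iff_map_eq_zero, sub_eq_zero]

theorem injective_aeval_of_dvd {p q : R[X]} (hpq : p ∣ q)
    (hq : Function.Injective ⇑(aeval T q)) : Function.Injective ⇑(aeval T p) := by
  obtain ⟨r, rfl⟩ := hpq
  rw [mul_comm, aeval_mul, mul_eq_comp, LinearMap.coe_comp] at hq
  exact hq.of_comp

theorem injective_aeval_prod {ι : Type*} (s : Finset ι) (p : ι → R[X])
    (hp : ∀ i ∈ s, Function.Injective ⇑(aeval T (p i))) :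
    Function.Injective ⇑(aeval T (∏ i ∈ s, p i)) :=
  Finset.prod_induction p (fun q => Function.Injective ⇑(aeval T q))
    (fun _ _ hq hq' => by rw [aeval_mul, mul_eq_comp, LinearMap.coe_comp]; exact hq.comp hq')
    (by simpa only [map_one, Module.End.coe_one] using Function.injective_id) hp

theorem aeval_cyclotomic_eq_zero_of_pow_eq_one {m : ℕ} (hm : 0 < m) (hTm : T ^ m = 1)
    (hfix : ∀ k : ℕ, 1 ≤ k → k < m → ∀ x : V, (T ^ k) x = x → x = 0) :
    aeval T (cyclotomic m R) = 0 := by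
  have hinj : Function.Injective ⇑(aeval T (∏ d ∈ m.properDivisors, cyclotomic d R)) := by
    refine injective_aeval_prod T _ _ fun d hd => ?_
    obtain ⟨hdm, hdlt⟩ := Nat.mem_properDivisors.mp hd
    refine injective_aeval_of_dvd T (cyclotomic.dvd_X_pow_sub_one d R) ?_
    exact (injective_aeval_X_pow_sub_one_iff T d).2 (hfix d (Nat.pos_of_dvd_of_pos hdm hm) hdlt)
  have hsplit : cyclotomic m R * ∏ d ∈ m.properDivisors, cyclotomic d R = X ^ m - 1 := by
    rw [← prod_cyclotomic_eq_X_pow_sub_one hm, ← Nat.cons_self_properDivisors hm.ne',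
      Finset.prod_cons]
  have hfactor :
      aeval T (∏ d ∈ m.properDivisors, cyclotomic d R) * aeval T (cyclotomic m R) = 0 := by
    rw [← aeval_mul, mul_comm, hsplit]
    simp [hTm]
  ext x
  apply hinj
  rw [LinearMap.zero_apply, map_zero, ← mul_apply, hfactor, LinearMap.zero_apply]

end CommRing

variable {K V : Type*} [Field K] [CharZero K] [AddCommGroup V] [Module K V] (T : Module.End K V)

theorem eq_zero_of_pow_apply_eq_self {m k : ℕ} (hΦ : aeval T (cyclotomic m K) = 0)
    (hk : 0 < k) (hkm : k < m) {x : V} (hx : (T ^ k) x = x) : x = 0 :=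
  Submodule.disjoint_def.1
    (disjoint_ker_aeval_of_isCoprime T (isCoprime_cyclotomic_X_pow_sub_one K hk hkm)) x
    (by simp [hΦ]) (by simp [hx])

theorem aeval_cyclotomic_eq_zero_iff {m : ℕ} (hm : 0 < m) (hTm : T ^ m = 1) :
    (∀ k : ℕ, 1 ≤ k → k < m → ∀ x : V, (T ^ k) x = x → x = 0) ↔
      aeval T (cyclotomic m K) = 0 :=
  ⟨aeval_cyclotomic_eq_zero_of_pow_eq_one T hm hTm,
    fun hΦ _ hk hkm _ hx => eq_zero_of_pow_apply_eq_self T hΦ hk hkm hx⟩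

end Module.End

theorem ContinuousLinearMap.toLinearMap_aeval {R M : Type*} [CommRing R] [TopologicalSpace M]
    [AddCommGroup M] [IsTopologicalAddGroup M] [Module R M] [ContinuousConstSMul R M]
    (T : M →L[R] M) (p : R[X]) : (aeval T p : M →ₗ[R] M) = aeval (T : Module.End R M) p := by
  induction p using Polynomial.induction_on' with
  | add p q hp hq => simp [hp, hq]
  | monomial n a => simp [toLinearMap_pow, Algebra.algebraMap_eq_smul_one]

theorem statement11_general (H : Type*) [NormedAddCommGroup H] [InnerProductSpace ℂ H]
    (T : H →L[ℂ] H) (m : ℕ) (hm : 0 < m) (hTm : T ^ m = 1) :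
    (∀ k : ℕ, 1 ≤ k → k < m → ∀ x : H, (T ^ k) x = x → x = 0) ↔
      Polynomial.aeval T (Polynomial.cyclotomic m ℂ) = 0 := by
  have hTm' : (T : Module.End ℂ H) ^ m = 1 := by
    rw [← ContinuousLinearMap.toLinearMap_pow, hTm]
    rfl
  have key := Module.End.aeval_cyclotomic_eq_zero_iff (T : Module.End ℂ H) hm hTm'
  rw [← ContinuousLinearMap.toLinearMap_aeval, ← ContinuousLinearMap.toLinearMap_zero,
    ContinuousLinearMap.coe_inj] at key
  simpa only [← ContinuousLinearMap.toLinearMap_pow, ContinuousLinearMap.coe_coe] using key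

/-- Let `T` be a continuous linear map of finite order `m` on a complex
Hilbert space (`T ^ m = 1` and `T ^ k ≠ 1` for `1 ≤ k < m`). Then `T, T², …, T^(m-1)`
all have no fixed point other than `0` if and only if `Φ_m(T) = 0`, where `Φ_m` is the
`m`-th cyclotomic polynomial. -/
theorem statement11 (H : Type*) [NormedAddCommGroup H] [InnerProductSpace ℂ H]
    [CompleteSpace H] (T : H →L[ℂ] H) (m : ℕ) (hm : 0 < m) (hTm : T ^ m = 1)
    (hord : ∀ k : ℕ, 1 ≤ k → k < m → T ^ k ≠ 1) :
    (∀ k : ℕ, 1 ≤ k → k < m → ∀ x : H, (T ^ k) x = x → x = 0) ↔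
      Polynomial.aeval T (Polynomial.cyclotomic m ℂ) = 0 :=
  statement11_general H T m hm hTm
end

section
/- Let p be a prime and V a nontrivial complex vector space. Then there is no injective group homomorphism ρ : (ℤ/pℤ) × (ℤ/pℤ) → GL(V) such that for every nonidentity element a the linear map ρ(a) has no fixed vector other than 0. -/
/-!
If no nonidentity element of a group `G` of exponent `p` fixes a nonzero vector, then for
`g ≠ 1` both the orbit sum `∑_{i<p} gⁱ v` and the group sum `∑_h h v` are fixed by `g`, hence
vanish. Summing `∑_{i<p} gⁱ v` over all `g` therefore gives `p • v` (only `g = 1` contributes);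
exchanging the sums, `g ↦ gⁱ` permutes the `p`-group `G` for `0 < i < p`, so the same double sum
is `|G| • v`. For `G = (ℤ/pℤ)²` this says `p • v = p² • v`, so `v = 0` in characteristic zero.
-/

open Finset

theorem Module.End.apply_geom_sum_of_pow_eq_one {k V : Type*} [Semiring k] [AddCommGroup V]
    [Module k V] (f : Module.End k V) {n : ℕ} (hf : f ^ n = 1) (v : V) :
    f (∑ i ∈ range n, (f ^ i) v) = ∑ i ∈ range n, (f ^ i) v := by
  have h := congrArg (· v) (mul_geom_sum f n)
  simpa [hf, sub_eq_zero, LinearMap.sum_apply] using h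

namespace Representation

section AddCommMonoid

variable {k G V : Type*} [CommSemiring k] [AddCommMonoid V] [Module k V]

def IsFixedPointFree [Monoid G] (ρ : Representation k G V) : Prop :=
  ∀ g ≠ 1, ∀ v, ρ g v = v → v = 0

namespace IsFixedPointFree

variable [Group G] [Fintype G] [Nontrivial G] {ρ : Representation k G V}

theorem sum_apply_eq_zero (hρ : ρ.IsFixedPointFree) (v : V) : ∑ g, ρ g v = 0 := by
  obtain ⟨g, hg⟩ := exists_ne (1 : G)
  refine hρ g hg _ ?_
  simp only [map_sum, ← Module.End.mul_apply, ← map_mul]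
  exact Equiv.sum_comp (Equiv.mulLeft g) (fun h => ρ h v)

theorem sum_apply_pow_eq_zero (hρ : ρ.IsFixedPointFree) {p : ℕ} (hG : IsPGroup p G) {n : ℕ}
    (hn : p.Coprime n) (v : V) : ∑ g, ρ (g ^ n) v = 0 := by
  rw [← hρ.sum_apply_eq_zero v]
  exact Equiv.sum_comp (hG.powEquiv hn) (fun g => ρ g v)

end IsFixedPointFree

end AddCommMonoid

namespace IsFixedPointFree

variable {k G V : Type*} [AddCommGroup V]

theorem sum_pow_apply_eq_zero [CommSemiring k] [Module k V] [Monoid G]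
    {ρ : Representation k G V} (hρ : ρ.IsFixedPointFree) {g : G} (hg : g ≠ 1) {n : ℕ}
    (hn : g ^ n = 1) (v : V) : ∑ i ∈ range n, ρ (g ^ i) v = 0 := by
  refine hρ g hg _ ?_
  simpa only [map_pow] using
    Module.End.apply_geom_sum_of_pow_eq_one (ρ g) (by rw [← map_pow, hn, map_one]) v

variable [Group G] [Fintype G] [Nontrivial G]

theorem card_smul_eq [CommSemiring k] [Module k V] {ρ : Representation k G V}
    (hρ : ρ.IsFixedPointFree) {p : ℕ} (hp : p.Prime) (hexp : ∀ g : G, g ^ p = 1) (v : V) :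
    Fintype.card G • v = p • v := by
  have hG : IsPGroup p G := fun g => ⟨1, by simpa using hexp g⟩
  calc Fintype.card G • v = ∑ i ∈ range p, ∑ g, ρ (g ^ i) v := by
        obtain ⟨q, rfl⟩ := Nat.exists_eq_add_one_of_ne_zero hp.ne_zero
        rw [sum_range_succ', sum_eq_zero fun i hi => hρ.sum_apply_pow_eq_zero hG
          (Nat.coprime_of_lt_prime i.succ_ne_zero (by simpa using hi) hp) v]
        simp
    _ = ∑ g, ∑ i ∈ range p, ρ (g ^ i) v := sum_comm
    _ = p • v := by
        rw [Fintype.sum_eq_single 1 fun g hg => hρ.sum_pow_apply_eq_zero hg (hexp g) v]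
        simp

theorem eq_zero_of_card_ne [Field k] [CharZero k] [Module k V] {ρ : Representation k G V}
    (hρ : ρ.IsFixedPointFree) {p : ℕ} (hp : p.Prime) (hexp : ∀ g : G, g ^ p = 1)
    (hcard : Fintype.card G ≠ p) (v : V) : v = 0 := by
  by_contra hv
  have h := hρ.card_smul_eq hp hexp v
  rw [← Nat.cast_smul_eq_nsmul k, ← Nat.cast_smul_eq_nsmul k] at h
  exact hcard (Nat.cast_injective (smul_left_injective k hv h))

end IsFixedPointFree

end Representation

/-- For a prime `p` and a nontrivial complex vector space `V`, there is no
injective group homomorphism `(ℤ/pℤ) × (ℤ/pℤ) → GL(V)` such that every nonidentity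
element acts without nonzero fixed vectors. -/
theorem statement12 (p : ℕ) (hp : p.Prime) (V : Type*) [AddCommGroup V] [Module ℂ V]
    (hV : ∃ v : V, v ≠ 0) :
    ¬ ∃ ρ : Multiplicative (ZMod p × ZMod p) →* (V ≃ₗ[ℂ] V),
        Function.Injective ρ ∧
        ∀ a : Multiplicative (ZMod p × ZMod p), a ≠ 1 → ∀ v : V, ρ a v = v → v = 0 := by
  rintro ⟨ρ, -, hfree⟩
  obtain ⟨v, hv⟩ := hV
  have : Fact p.Prime := ⟨hp⟩
  have hexp : ∀ g : Multiplicative (ZMod p × ZMod p), g ^ p = 1 := fun g => by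
    apply Multiplicative.toAdd.injective
    simp [Prod.ext_iff]
  have hcard : Fintype.card (Multiplicative (ZMod p × ZMod p)) ≠ p := by
    simpa [ZMod.card] using (Nat.lt_mul_self_iff.2 hp.one_lt).ne'
  exact hv (Representation.IsFixedPointFree.eq_zero_of_card_ne
    (ρ := LinearEquiv.automorphismGroup.toLinearMapMonoidHom.comp ρ) hfree hp hexp hcard v)
end

section
/- Let n, m be positive integers with gcd(n, m) > 1 and let V be a nontrivial complex vector space. Then there is no injective group homomorphism ρ : (ℤ/nℤ) × (ℤ/mℤ) → GL(V) such that for every nonidentity element a the linear map ρ(a) has no fixed vector other than 0. In other words, any group containing a subgroup isomorphic to ℤ/nℤ ⊕ ℤ/mℤ with gcd(n,m) ≠ 1 cannot act faithfully and linearly on V without nonzero fixed points. -/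
/-!
If a nontrivial element `g` with `g ^ p = 1` acts without nonzero fixed vectors, then
`∑_{i<p} ρ(g^i) w` is fixed by `ρ g`, hence zero. A prime `p ∣ gcd(n, m)` gives commuting
elements `a, b` of order `p` with `a ∉ ⟨b⟩`. Summing the vanishing averages over `⟨a b^k⟩`
for `k < p` and exchanging the sums, the inner sum for `i ≠ 0` is `ρ(a^i)` applied to an
average over `⟨b^i⟩`, hence zero, while `i = 0` contributes `p • v`. So `p • v = 0`, which
forces `v = 0` over `ℂ`.
-/

open Finset

theorem LinearEquiv.sum_range_pow_apply_eq_zero {R V : Type*} [Semiring R] [AddCommGroup V]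
    [Module R V] {f : V ≃ₗ[R] V} {p : ℕ} (hf : f ^ p = 1) (hfix : ∀ v, f v = v → v = 0)
    (w : V) : ∑ i ∈ range p, (f ^ i) w = 0 := by
  apply hfix
  have hshift := (sum_range_succ' (fun i => (f ^ i) w) p).symm.trans
    (sum_range_succ (fun i => (f ^ i) w) p)
  rw [hf, pow_zero] at hshift
  simpa only [map_sum, ← LinearEquiv.mul_apply, ← pow_succ'] using add_right_cancel hshift

section FixedPointFree

variable {G R V : Type*} [Group G] [Semiring R] [AddCommGroup V] [Module R V]
  {ρ : G →* (V ≃ₗ[R] V)}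

theorem sum_range_apply_pow_eq_zero_of_fixedPointFree
    (hρ : ∀ g, g ≠ 1 → ∀ v, ρ g v = v → v = 0) {g : G} (hg : g ≠ 1) {p : ℕ}
    (hgp : g ^ p = 1) (w : V) : ∑ i ∈ range p, ρ (g ^ i) w = 0 := by
  simpa only [map_pow] using
    LinearEquiv.sum_range_pow_apply_eq_zero (by rw [← map_pow, hgp, map_one]) (hρ g hg) w

theorem orderOf_nsmul_eq_zero_of_fixedPointFree
    (hρ : ∀ g, g ≠ 1 → ∀ v, ρ g v = v → v = 0) {a b : G} (hab : Commute a b)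
    (ha : a ^ orderOf b = 1) (hab_zpowers : a ∉ Subgroup.zpowers b) (v : V) : orderOf b • v = 0 := by
  set p := orderOf b
  have hbp : b ^ p = 1 := pow_orderOf_eq_one b
  have hpow : ∀ i k, (a * b ^ k) ^ i = a ^ i * (b ^ i) ^ k := fun i k => by
    rw [(hab.pow_right k).mul_pow, ← pow_mul, ← pow_mul, mul_comm]
  have hrow : ∀ k, ∑ i ∈ range p, ρ ((a * b ^ k) ^ i) v = 0 := fun k => by
    refine sum_range_apply_pow_eq_zero_of_fixedPointFree hρ (fun h => hab_zpowers ?_) ?_ v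
    · refine Subgroup.mem_zpowers_iff.2 ⟨-k, ?_⟩
      rw [zpow_neg, zpow_natCast, eq_inv_of_mul_eq_one_left h]
    · rw [hpow, ha, hbp, one_pow, one_mul]
  have hcol : ∀ i ∈ range p, i ≠ 0 → ∑ k ∈ range p, ρ ((a * b ^ k) ^ i) v = 0 := by
    intro i hi hi0
    have hbi : b ^ i ≠ 1 := pow_ne_one_of_lt_orderOf hi0 (mem_range.1 hi)
    have hbip : (b ^ i) ^ p = 1 := by rw [pow_right_comm, hbp, one_pow]
    simp only [hpow, map_mul, LinearEquiv.mul_apply, ← map_sum,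
      sum_range_apply_pow_eq_zero_of_fixedPointFree hρ hbi hbip, map_zero]
  calc p • v = ∑ i ∈ range p, ∑ k ∈ range p, ρ ((a * b ^ k) ^ i) v := by
        rcases Nat.eq_zero_or_pos p with hp | hp
        · simp [hp]
        · rw [sum_eq_single_of_mem 0 (mem_range.2 hp) hcol]
          simp
    _ = 0 := by rw [sum_comm]; exact sum_eq_zero fun k _ => hrow k

end FixedPointFree

/-- For positive integers `n, m` with `gcd(n, m) > 1` and a nontrivial
complex vector space `V`, there is no injective group homomorphism
`(ℤ/nℤ) × (ℤ/mℤ) → GL(V)` such that every nonidentity element acts without nonzero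
fixed vectors. -/
theorem statement13 (n m : ℕ) (hn : 0 < n) (hm : 0 < m) (hgcd : 1 < Nat.gcd n m)
    (V : Type*) [AddCommGroup V] [Module ℂ V] (hV : ∃ v : V, v ≠ 0) :
    ¬ ∃ ρ : Multiplicative (ZMod n × ZMod m) →* (V ≃ₗ[ℂ] V),
        Function.Injective ρ ∧
        ∀ a : Multiplicative (ZMod n × ZMod m), a ≠ 1 → ∀ v : V, ρ a v = v → v = 0 := by
  rintro ⟨ρ, -, hρ⟩
  obtain ⟨v, hv⟩ := hV
  obtain ⟨p, hp, hpgcd⟩ := Nat.exists_prime_and_dvd hgcd.ne'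
  have : Fact p.Prime := ⟨hp⟩
  have : NeZero n := NeZero.of_pos hn
  have : NeZero m := NeZero.of_pos hm
  obtain ⟨x, hx⟩ := exists_prime_addOrderOf_dvd_card (G := ZMod n) p
    (by simpa using hpgcd.trans (Nat.gcd_dvd_left n m))
  obtain ⟨y, hy⟩ := exists_prime_addOrderOf_dvd_card (G := ZMod m) p
    (by simpa using hpgcd.trans (Nat.gcd_dvd_right n m))
  have hb : orderOf (Multiplicative.ofAdd ((0 : ZMod n), y)) = p := by
    simp [orderOf_ofAdd_eq_addOrderOf, Prod.addOrderOf_mk, hy]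
  have ha : Multiplicative.ofAdd (x, (0 : ZMod m)) ^ p = 1 := by
    rw [← ofAdd_nsmul, Prod.smul_mk, smul_zero, ← hx, addOrderOf_nsmul_eq_zero]
    rfl
  have hab_zpowers : Multiplicative.ofAdd (x, (0 : ZMod m)) ∉
      Subgroup.zpowers (Multiplicative.ofAdd ((0 : ZMod n), y)) := by
    intro h
    obtain ⟨k, hk⟩ := Subgroup.mem_zpowers_iff.1 h
    have hx0 : x = 0 := by simpa using (congrArg (fun g => g.toAdd.1) hk).symm
    exact hp.one_lt.ne' (by rw [← hx, hx0, addOrderOf_zero])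
  have hpv := orderOf_nsmul_eq_zero_of_fixedPointFree hρ (Commute.all _ _) (hb ▸ ha) hab_zpowers v
  rw [hb, ← Nat.cast_smul_eq_nsmul ℂ, smul_eq_zero] at hpv
  exact hpv.elim (fun h => hp.ne_zero (by exact_mod_cast h)) hv
end
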